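/- For all m, n ≥ 1, the order ⊑ is a well-quasi-order on T^ω_{≤m,<n}, the set of finite ω-labeled trees of height at most m with fewer than n nodes labeled 0. -/

import Mathlib

/-- `m ≼ n` iff `m = n = 0` or `0 < m ≤ n`. -/
def pre (m n : ℕ) : Prop := (m = 0 ∧ n = 0) ∨ (0 < m ∧ m ≤ n)

/-- A finite ω-labeled tree in standard representation: a root label, the list
of subtrees generated by the root's immediate successors labeled `0`, and the
list of those labeled `> 0` (the last one having minimal root label). -/
inductive OTree where
  | node : ℕ → List OTree → List OTree → OTree

/-- The root label of an ω-tree. -/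
def OTree.label : OTree → ℕ
  | node s _ _ => s

mutual
  /-- The height of an ω-tree. -/
  def OTree.height : OTree → ℕ
    | .node _ l r => 1 + max (OTree.heights l) (OTree.heights r)
  def OTree.heights : List OTree → ℕ
    | [] => 0
    | t :: ts => max t.height (OTree.heights ts)
end

mutual
  /-- The number of nodes labeled `0` in an ω-tree. -/
  def OTree.zeros : OTree → ℕ
    | .node s l r => (if s = 0 then 1 else 0) + OTree.zerosL l + OTree.zerosL r
  def OTree.zerosL : List OTree → ℕ
    | [] => 0
    | t :: ts => t.zeros + OTree.zerosL ts
end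

mutual
  /-- Well-formedness of the standard representation: subtrees in the first
  list have root label `0`, subtrees in the second list have positive root
  label, and the last of them has minimal root label. -/
  def OTree.wf : OTree → Prop
    | .node _ l r =>
      OTree.wfZ l ∧ OTree.wfP r ∧ (∀ a ∈ r.getLast?, ∀ t ∈ r, a.label ≤ t.label)
  def OTree.wfZ : List OTree → Prop
    | [] => True
    | t :: ts => t.label = 0 ∧ t.wf ∧ OTree.wfZ ts
  def OTree.wfP : List OTree → Prop
    | [] => True
    | t :: ts => 0 < t.label ∧ t.wf ∧ OTree.wfP ts
end

/-- The order `⊑` on ω-trees: `TSub t t'` iff the root labels are `≼`-related,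
the `0`-labeled subtree lists have the same length and are componentwise
related, and the positively labeled subtree lists are either both empty, or
both nonempty with the last of the first related to the last of the second and
a strictly monotone (Higman-style) embedding of the first list into the second
with componentwise relatedness. -/
inductive TSub : OTree → OTree → Prop where
  | nilR {s s' : ℕ} {l l' : List OTree} (hs : pre s s') (hlen : l.length = l'.length)
      (hl : ∀ i : Fin l.length, TSub (l.get i) (l'.get (Fin.cast hlen i))) :
      TSub (.node s l []) (.node s' l' [])
  | consR {s s' : ℕ} {l l' r r' : List OTree} (hs : pre s s') (hlen : l.length = l'.length)
      (hl : ∀ i : Fin l.length, TSub (l.get i) (l'.get (Fin.cast hlen i)))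
      (hr : r ≠ []) (hr' : r' ≠ [])
      (idx : Fin r.length → Fin r'.length) (hmono : StrictMono idx)
      (hcomp : ∀ i : Fin r.length, TSub (r.get i) (r'.get (idx i)))
      (hlast : ∀ a ∈ r.getLast?, ∀ b ∈ r'.getLast?, TSub a b) :
      TSub (.node s l r) (.node s' l' r')

/-! By induction on the height bound `m`. A tree of height `≤ m + 1` is a root label together with
its list of `0`-labelled children and its list of positively labelled children, all of height
`≤ m`; there are fewer than `n` children of the first kind, as each is a `0`-labelled node. The
order `≼` is a wqo on labels. By Higman's lemma, together with a pigeonhole on lengths, comparing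
lists of fewer than `n` trees componentwise is a wqo; by Higman's lemma and the wqo on last
elements, embedding nonempty lists with last element sent to last element is a wqo. Building a
node from these three components is monotone into `⊑`, and a monotone image of a product of wqos
is a wqo. -/

namespace List

variable {α β : Type*}

theorem forall₂_trans {r : α → α → Prop} [IsTrans α r] :
    ∀ {l₁ l₂ l₃ : List α}, Forall₂ r l₁ l₂ → Forall₂ r l₂ l₃ → Forall₂ r l₁ l₃
  | _, _, _, .nil, .nil => .nil
  | _, _, _, .cons h₁ t₁, .cons h₂ t₂ => .cons (_root_.trans h₁ h₂) (forall₂_trans t₁ t₂)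

instance Forall₂.isPreorder {r : α → α → Prop} [IsPreorder α r] :
    IsPreorder (List α) (Forall₂ r) where
  refl := forall₂_refl
  trans _ _ _ := forall₂_trans

instance SublistForall₂.isPreorder {r : α → α → Prop} [IsPreorder α r] :
    IsPreorder (List α) (SublistForall₂ r) where
  refl := refl_of _
  trans _ _ _ := _root_.trans

theorem SublistForall₂.forall₂_of_length_eq {r : α → β → Prop} {l₁ : List α} {l₂ : List β}
    (h : SublistForall₂ r l₁ l₂) (hlen : l₁.length = l₂.length) : Forall₂ r l₁ l₂ := by
  obtain ⟨l, hl, hsub⟩ := sublistForall₂_iff.1 h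
  rwa [hsub.eq_of_length (hl.length_eq.symm.trans hlen)] at hl

theorem SublistForall₂.exists_strictMono_get {r : α → β → Prop} {l₁ : List α} {l₂ : List β}
    (h : SublistForall₂ r l₁ l₂) :
    ∃ idx : Fin l₁.length → Fin l₂.length, StrictMono idx ∧ ∀ i, r (l₁.get i) (l₂.get (idx i)) := by
  obtain ⟨l, hl, hsub⟩ := sublistForall₂_iff.1 h
  obtain ⟨emb, hemb⟩ := sublist_iff_exists_fin_orderEmbedding_get_eq.1 hsub
  refine ⟨fun i => emb (Fin.cast hl.length_eq i), fun i j hij => emb.strictMono hij, fun i => ?_⟩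
  rw [← hemb]
  exact hl.get i.isLt _

end List

namespace Set.PartiallyWellOrderedOn

variable {α β : Type*} {r r' : α → α → Prop} {s : Set α}

theorem mono' (h : ∀ a ∈ s, ∀ b ∈ s, r a b → r' a b) (hs : s.PartiallyWellOrderedOn r) :
    s.PartiallyWellOrderedOn r' := by
  simpa using hs.image_of_monotone_on (f := id) h

theorem of_image {f : α → β} {r : β → β → Prop} (h : (f '' s).PartiallyWellOrderedOn r) :
    s.PartiallyWellOrderedOn fun a b => r (f a) (f b) := by
  rw [partiallyWellOrderedOn_iff_exists_lt] at h ⊢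
  exact fun g hg => h (f ∘ g) fun n => mem_image_of_mem f (hg n)

theorem and [IsPreorder α r] (hr : s.PartiallyWellOrderedOn r)
    (hr' : s.PartiallyWellOrderedOn r') : s.PartiallyWellOrderedOn fun a b => r a b ∧ r' a b := by
  rw [partiallyWellOrderedOn_iff_exists_lt]
  intro f hf
  obtain ⟨g, hg⟩ := hr.exists_monotone_subseq hf
  obtain ⟨i, j, hij, h⟩ := hr'.exists_lt fun n => hf (g n)
  exact ⟨g i, g j, g.strictMono hij, hg i j hij.le, h⟩

theorem forall₂_of_length_lt [IsPreorder α r] (hs : s.PartiallyWellOrderedOn r) (n : ℕ) :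
    {l : List α | (∀ x ∈ l, x ∈ s) ∧ l.length < n}.PartiallyWellOrderedOn (List.Forall₂ r) := by
  have hHigman : {l : List α | (∀ x ∈ l, x ∈ s) ∧ l.length < n}.PartiallyWellOrderedOn
      (List.SublistForall₂ r) :=
    (hs.partiallyWellOrderedOn_sublistForall₂ r).mono fun _ hl => hl.1
  have hlength : {l : List α | (∀ x ∈ l, x ∈ s) ∧ l.length < n}.PartiallyWellOrderedOn
      fun l l' => l.length = l'.length :=
    of_image ((finite_Iio n).subset (image_subset_iff.2 fun _ hl => hl.2)).partiallyWellOrderedOn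
  exact (hHigman.and hlength).mono' fun _ _ _ _ h => h.1.forall₂_of_length_eq h.2

theorem getLast? (hs : s.PartiallyWellOrderedOn r) :
    {l : List α | (∀ x ∈ l, x ∈ s) ∧ l ≠ []}.PartiallyWellOrderedOn
      fun l l' => ∀ a ∈ l.getLast?, ∀ b ∈ l'.getLast?, r a b := by
  rw [partiallyWellOrderedOn_iff_exists_lt]
  intro f hf
  obtain ⟨i, j, hij, h⟩ := hs.exists_lt fun n => (hf n).1 _ (List.getLast_mem (hf n).2)
  refine ⟨i, j, hij, ?_⟩
  simp only [List.getLast?_eq_some_getLast (hf _).2, Option.mem_some_iff]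
  rintro _ rfl _ rfl
  exact h

theorem sublistForall₂_and_getLast? [IsPreorder α r] (hs : s.PartiallyWellOrderedOn r) :
    {l : List α | (∀ x ∈ l, x ∈ s) ∧ l ≠ []}.PartiallyWellOrderedOn
      fun l l' => List.SublistForall₂ r l l' ∧ ∀ a ∈ l.getLast?, ∀ b ∈ l'.getLast?, r a b :=
  ((hs.partiallyWellOrderedOn_sublistForall₂ r).mono fun _ hl => hl.1).and hs.getLast?

end Set.PartiallyWellOrderedOn

theorem pre_refl (s : ℕ) : pre s s := by
  unfold pre; omega

theorem pre_trans {a b c : ℕ} (hab : pre a b) (hbc : pre b c) : pre a c := by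
  unfold pre at *; omega

instance : IsPreorder ℕ pre where
  refl := pre_refl
  trans _ _ _ := pre_trans

theorem wellQuasiOrdered_pre : WellQuasiOrdered pre := by
  have hpos : {k : ℕ | 0 < k}.PartiallyWellOrderedOn pre :=
    (Set.partiallyWellOrderedOn_of_wellQuasiOrdered wellQuasiOrdered_le _).mono'
      fun _ ha _ _ hab => .inr ⟨ha, hab⟩
  have hsplit : (Set.univ : Set ℕ) = {0} ∪ {k | 0 < k} := by
    ext k; simp [Nat.pos_iff_ne_zero, em]
  rw [← Set.partiallyWellOrderedOn_univ_iff, hsplit]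
  exact (Set.partiallyWellOrderedOn_singleton 0).union hpos

theorem TSub.refl : ∀ t : OTree, TSub t t
  | .node s l r => by
    have hl : ∀ u ∈ l, TSub u u := fun u _ => TSub.refl u
    have hr : ∀ u ∈ r, TSub u u := fun u _ => TSub.refl u
    cases r with
    | nil => exact .nilR (pre_refl s) rfl fun i => hl _ (l.get_mem i)
    | cons a r =>
      refine .consR (pre_refl s) rfl (fun i => hl _ (l.get_mem i)) (List.cons_ne_nil _ _)
        (List.cons_ne_nil _ _) id strictMono_id (fun i => hr _ (List.get_mem _ i)) ?_
      intro x hx y hy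
      obtain rfl := Option.mem_unique hx hy
      exact hr x (List.mem_of_getLast? hx)

theorem TSub.trans {t₁ t₂ t₃ : OTree} (h₁₂ : TSub t₁ t₂) (h₂₃ : TSub t₂ t₃) : TSub t₁ t₃ := by
  induction h₁₂ generalizing t₃ with
  | nilR hs hlen _ ih =>
    cases h₂₃ with
    | nilR hs' hlen' hl' =>
      exact .nilR (pre_trans hs hs') (hlen.trans hlen') fun i => ih i (hl' (Fin.cast hlen i))
    | consR _ _ _ hr => exact absurd rfl hr
  | consR hs hlen _ hr hr' idx hmono _ _ ih ihcomp ihlast =>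
    cases h₂₃ with
    | nilR => exact absurd rfl hr'
    | consR hs' hlen' hl' _ hr'' idx' hmono' hcomp' hlast' =>
      refine .consR (pre_trans hs hs') (hlen.trans hlen') (fun i => ih i (hl' (Fin.cast hlen i)))
        hr hr'' (idx' ∘ idx) (hmono'.comp hmono) (fun i => ihcomp i (hcomp' (idx i))) ?_
      have hb := List.getLast?_eq_some_getLast hr'
      exact fun a ha c hc => ihlast a ha _ hb (hlast' _ hb c hc)

instance : IsPreorder OTree TSub where
  refl := TSub.refl
  trans _ _ _ := TSub.trans

theorem TSub.node_nil {s s' : ℕ} {l l' : List OTree} (hs : pre s s') (hl : l.Forall₂ TSub l') :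
    TSub (.node s l []) (.node s' l' []) :=
  .nilR hs hl.length_eq fun i => hl.get i.isLt _

theorem TSub.node_of_ne_nil {s s' : ℕ} {l l' r r' : List OTree} (hs : pre s s')
    (hl : l.Forall₂ TSub l') (hr : r ≠ []) (hr' : r' ≠ []) (hsub : r.SublistForall₂ TSub r')
    (hlast : ∀ a ∈ r.getLast?, ∀ b ∈ r'.getLast?, TSub a b) :
    TSub (.node s l r) (.node s' l' r') :=
  have ⟨idx, hmono, hcomp⟩ := hsub.exists_strictMono_get
  .consR hs hl.length_eq (fun i => hl.get i.isLt _) hr hr' idx hmono hcomp hlast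

namespace OTree

theorem one_le_height (t : OTree) : 1 ≤ t.height := by
  obtain ⟨_, _, _⟩ := t
  simp only [height]
  omega

theorem height_le_heights {t : OTree} {l : List OTree} (h : t ∈ l) : t.height ≤ heights l := by
  induction l with
  | nil => simp at h
  | cons a l ih =>
    simp only [heights]
    rcases List.mem_cons.1 h with rfl | h
    · exact le_max_left _ _
    · exact (ih h).trans (le_max_right _ _)

theorem zeros_le_zerosL {t : OTree} {l : List OTree} (h : t ∈ l) : t.zeros ≤ zerosL l := by
  induction l with
  | nil => simp at h
  | cons a l ih =>
    simp only [zerosL]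
    rcases List.mem_cons.1 h with rfl | h
    · omega
    · have := ih h; omega

theorem wf_of_mem_of_wfZ {t : OTree} {l : List OTree} (hl : wfZ l) (h : t ∈ l) : t.wf := by
  induction l with
  | nil => simp at h
  | cons a l ih =>
    rcases List.mem_cons.1 h with rfl | h
    exacts [hl.2.1, ih hl.2.2 h]

theorem wf_of_mem_of_wfP {t : OTree} {l : List OTree} (hl : wfP l) (h : t ∈ l) : t.wf := by
  induction l with
  | nil => simp at h
  | cons a l ih =>
    rcases List.mem_cons.1 h with rfl | h
    exacts [hl.2.1, ih hl.2.2 h]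

theorem length_le_zerosL {l : List OTree} (hl : wfZ l) : l.length ≤ zerosL l := by
  induction l with
  | nil => simp
  | cons a l ih =>
    obtain ⟨ha, -, hl⟩ := hl
    obtain ⟨s, _, _⟩ := a
    simp only [label] at ha
    simp only [zerosL, zeros, ha, List.length_cons, if_true]
    have := ih hl
    omega

-- The paper's `T^ω_{≤m,<n}`, on well-formed representations.
def bounded (m n : ℕ) : Set OTree :=
  {t | t.wf ∧ t.height ≤ m ∧ t.zeros < n}

theorem bounded_zero (n : ℕ) : bounded 0 n = ∅ :=
  Set.eq_empty_of_forall_notMem fun t ht => Nat.not_succ_le_zero 0 ((one_le_height t).trans ht.2.1)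

theorem children_mem_bounded {m n s : ℕ} {l r : List OTree} (h : node s l r ∈ bounded (m + 1) n) :
    (∀ u ∈ l, u ∈ bounded m n) ∧ l.length < n ∧ (∀ u ∈ r, u ∈ bounded m n) := by
  obtain ⟨⟨hl, hr, -⟩, hh, hz⟩ := h
  simp only [height] at hh
  have hz' : zerosL l + zerosL r < n := by simp only [zeros] at hz; omega
  refine ⟨fun u hu => ⟨wf_of_mem_of_wfZ hl hu, ?_, ?_⟩, (length_le_zerosL hl).trans_lt (by omega),
    fun u hu => ⟨wf_of_mem_of_wfP hr hu, ?_, ?_⟩⟩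
  · have := height_le_heights hu; omega
  · have := zeros_le_zerosL hu; omega
  · have := height_le_heights hu; omega
  · have := zeros_le_zerosL hu; omega

theorem partiallyWellOrderedOn_bounded_succ {m n : ℕ}
    (h : (bounded m n).PartiallyWellOrderedOn TSub) :
    (bounded (m + 1) n).PartiallyWellOrderedOn TSub := by
  have hpre := Set.partiallyWellOrderedOn_univ_iff.2 wellQuasiOrdered_pre
  have hzero := h.forall₂_of_length_lt n
  have hpos := h.sublistForall₂_and_getLast?
  have hnil := (hpre.prod hzero).image_of_monotone_on (f := fun p => node p.1 p.2 [])
    fun _ _ _ _ h => TSub.node_nil h.1 h.2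
  have hcons := (hpre.prod (hzero.prod hpos)).image_of_monotone_on
    (f := fun p => node p.1 p.2.1 p.2.2)
    fun _ ha _ hb h => TSub.node_of_ne_nil h.1 h.2.1 ha.2.2.2 hb.2.2.2 h.2.2.1 h.2.2.2
  refine (hnil.union hcons).mono ?_
  rintro ⟨s, l, r⟩ ht
  obtain ⟨hl, hlen, hr⟩ := children_mem_bounded ht
  cases r with
  | nil => exact .inl ⟨(s, l), ⟨trivial, hl, hlen⟩, rfl⟩
  | cons a r => exact .inr ⟨(s, l, a :: r), ⟨trivial, ⟨hl, hlen⟩, hr, List.cons_ne_nil _ _⟩, rfl⟩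

theorem partiallyWellOrderedOn_bounded (m n : ℕ) : (bounded m n).PartiallyWellOrderedOn TSub := by
  induction m with
  | zero => simp [bounded_zero]
  | succ m ih => exact partiallyWellOrderedOn_bounded_succ ih

end OTree

/-- For all `m, n ≥ 1`, the order `⊑` is a well-quasi-order on the set of
(well-formed) finite ω-trees of height at most `m` with fewer than `n` nodes
labeled `0`: every infinite sequence of such trees has an infinite
`⊑`-chain subsequence. -/
theorem tsub_isWqo (m n : ℕ) (hm : 1 ≤ m) (hn : 1 ≤ n) (f : ℕ → OTree)
    (hwf : ∀ i, (f i).wf) (hh : ∀ i, (f i).height ≤ m) (hz : ∀ i, (f i).zeros < n) :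
    ∃ g : ℕ → ℕ, StrictMono g ∧ ∀ i j : ℕ, i < j → TSub (f (g i)) (f (g j)) := by
  obtain ⟨g, hg⟩ := (OTree.partiallyWellOrderedOn_bounded m n).exists_monotone_subseq
    fun i => ⟨hwf i, hh i, hz i⟩
  exact ⟨g, g.strictMono, fun i j hij => hg i j hij.le⟩
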